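/- Let k ≥ 1 and let w = (w_0,…,w_m) ∈ {0,1,…,k}^{m+1} have exactly T ≥ 1 nonzero entries. Then |ρ(w) − 1/2| ≤ (1/2)·((k−1)/(k+1))^T; equivalently 1/2 − (1/2)·((k−1)/(k+1))^T ≤ ρ(w) ≤ 1/2 + (1/2)·((k−1)/(k+1))^T. -/
import Mathlib


open Finset

/-- Success probability `ρ(w) = (1 − ∏_i (1 − 2·w_i/(k+1)))/2` for a weight profile
`w = (w_0,…,w_m)`. -/
noncomputable def rhoRaS (k m : ℕ) (w : Fin (m + 1) → ℕ) : ℝ :=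
  (1 - ∏ i, (1 - 2 * (w i : ℝ) / ((k : ℝ) + 1))) / 2

/-- If `k ≥ 1` and the weight profile `w ∈ {0,…,k}^{m+1}` has exactly `T ≥ 1` nonzero
entries, then `|ρ(w) − 1/2| ≤ (1/2)·((k−1)/(k+1))^T`. -/
theorem rhoRaS_half_dist_bound
    (k m T : ℕ) (hk : 1 ≤ k) (hT : 1 ≤ T)
    (w : Fin (m + 1) → ℕ) (hwk : ∀ i, w i ≤ k)
    (hTcard : (Finset.univ.filter (fun i : Fin (m + 1) => w i ≠ 0)).card = T) :
    |rhoRaS k m w - 1 / 2| ≤ (1 / 2) * (((k : ℝ) - 1) / ((k : ℝ) + 1)) ^ T := by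
  have hk1 : (1 : ℝ) ≤ (k : ℝ) := by exact_mod_cast hk
  have hkpos : (0 : ℝ) < (k : ℝ) + 1 := by linarith
  set c : ℝ := ((k : ℝ) - 1) / ((k : ℝ) + 1) with hc
  have hc0 : 0 ≤ c := div_nonneg (by linarith) (by linarith)
  have hc1 : c ≤ 1 := by
    rw [hc, div_le_one hkpos]; linarith
  have key : |rhoRaS k m w - 1 / 2| =
      (∏ i, |1 - 2 * (w i : ℝ) / ((k : ℝ) + 1)|) / 2 := by
    rw [rhoRaS, ← Finset.abs_prod]
    rw [show (1 - ∏ i, (1 - 2 * (w i : ℝ) / ((k : ℝ) + 1))) / 2 - 1 / 2 =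
      -(∏ i, (1 - 2 * (w i : ℝ) / ((k : ℝ) + 1))) / 2 by ring, abs_div, abs_neg]
    norm_num
  rw [key]
  have hbound : ∀ i : Fin (m + 1), |1 - 2 * (w i : ℝ) / ((k : ℝ) + 1)| ≤
      (if w i ≠ 0 then c else 1) := by
    intro i
    by_cases h : w i = 0
    · simp [h]
    · simp only [h, if_pos, ne_eq, not_false_eq_true, if_true]
      have hwi1 : (1 : ℝ) ≤ (w i : ℝ) := by
        exact_mod_cast Nat.one_le_iff_ne_zero.mpr h
      have hwik : (w i : ℝ) ≤ (k : ℝ) := by exact_mod_cast hwk i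
      have hrw : 1 - 2 * (w i : ℝ) / ((k : ℝ) + 1) =
          ((k : ℝ) + 1 - 2 * (w i : ℝ)) / ((k : ℝ) + 1) := by
        field_simp
      rw [hrw, hc, abs_div, abs_of_pos hkpos]
      gcongr
      rw [abs_le]
      constructor <;> linarith
  have hprod : (∏ i, |1 - 2 * (w i : ℝ) / ((k : ℝ) + 1)|) ≤
      ∏ i, (if w i ≠ 0 then c else 1) := by
    apply Finset.prod_le_prod (fun i _ => abs_nonneg _) (fun i _ => hbound i)
  have heq : (∏ i : Fin (m + 1), (if w i ≠ 0 then c else 1)) = c ^ T := by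
    rw [Finset.prod_ite, Finset.prod_const, Finset.prod_const, one_pow, mul_one, hTcard]
  rw [heq] at hprod
  linarith
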